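/- Dynamic programming relation for the importance-sampling value function: with u(n,x) defined as the infimum, over all admissible Markov control sequences δ_n,…,δ_{N−1} (each δ_k : ℕ^d → [0,∞)^J with δ_k(y) ∈ A_y for every y), of the expectation E[ g²(X̄_N) · Π_{k=n}^{N−1} L(X̄_k, δ_k(X̄_k), P̄_k)² ] for the controlled chain started at X̄_n = x (expectations of nonnegative quantities, valued in [0,∞]), the value function satisfies the terminal condition u(N,x) = g²(x) for all x ∈ ℕ^d, and for every n = N−1,…,0 and x ∈ ℕ^d: u(n,x) = inf over δ ∈ A_x of exp((−2·Σ_{j=1}^J a_j(x) + Σ_{j=1}^J δ_j)·Δt) · Σ_{p ∈ ℕ^J} [ Π_{j=1}^J ((Δt·δ_j)^{p_j}/p_j!) · (a_j(x)/δ_j)^{2 p_j} ] · u(n+1, Φ(x,p)). -/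

import Mathlib

set_option maxHeartbeats 1000000


noncomputable section

open scoped BigOperators ENNReal
open Real

/-- `Φ(x,p) = max(0, x + ∑_j p_j ν_j)`, the componentwise maximum with `0`. -/
def Phi {d J : ℕ} (ν : Fin J → Fin d → ℤ) (x : Fin d → ℕ) (p : Fin J → ℕ) : Fin d → ℕ :=
  fun i => (max 0 ((x i : ℤ) + ∑ j, (p j : ℤ) * ν j i)).toNat

/-- Admissible control set at state `x`: `δ_j = 0` exactly when `a_j(x) = 0`, and
`δ_j > 0` otherwise. -/
def Adm {d J : ℕ} (a : Fin J → (Fin d → ℕ) → ℝ) (x : Fin d → ℕ) (δ : Fin J → ℝ) : Prop :=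
  ∀ j, (a j x = 0 → δ j = 0) ∧ (a j x ≠ 0 → 0 < δ j)

/-- Probability mass at `p` of the product Poisson distribution on `ℕ^J` with rate
vector `r`: `∏ j, e^{-r_j} r_j^{p_j} / p_j!` (with `0^0 = 1`). -/
def poiProb {J : ℕ} (r : Fin J → ℝ) (p : Fin J → ℕ) : ℝ :=
  ∏ j, Real.exp (-(r j)) * (r j) ^ (p j) / ((p j).factorial : ℝ)

/-- One-step likelihood ratio
`L(x,δ,p) = ∏_j e^{-(a_j(x) - δ_j) Δt} (a_j(x)/δ_j)^{p_j}`,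
with the convention `(a_j(x)/δ_j)^{p_j} := 1` when `a_j(x) = δ_j = 0`. -/
def lik {d J : ℕ} (a : Fin J → (Fin d → ℕ) → ℝ) (Δt : ℝ) (x : Fin d → ℕ)
    (δ : Fin J → ℝ) (p : Fin J → ℕ) : ℝ :=
  ∏ j, Real.exp (-(a j x - δ j) * Δt) *
    (if a j x = 0 ∧ δ j = 0 then 1 else (a j x / δ j) ^ (p j))

/-- Trajectory of the controlled chain: `traj ν x P 0 = x` and
`traj ν x P (k+1) = Φ(traj ν x P k, P k)`, where `P k` is the `k`-th increment. -/
def traj {d J : ℕ} (ν : Fin J → Fin d → ℤ) (x : Fin d → ℕ) (P : ℕ → Fin J → ℕ) :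
    ℕ → (Fin d → ℕ)
  | 0 => x
  | k + 1 => Phi ν (traj ν x P k) (P k)

/-- Extension of a finite increment sequence to `ℕ` (by zero). -/
def ext {J : ℕ} (m : ℕ) (P : Fin m → Fin J → ℕ) : ℕ → Fin J → ℕ :=
  fun k => if h : k < m then P ⟨k, h⟩ else 0

/-- The expectation `E[ g²(X̄_N) ∏_{k=n}^{N-1} L(X̄_k, δ_k(X̄_k), P̄_k)² ]` (valued in
`[0,∞]`) for the controlled chain started at `X̄_n = x` with Markov controls
`D k : ℕ^d → ℝ^J`, where conditioned on `X̄_k` the increment `P̄_k` is distributed as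
`Poi((D k (X̄_k))_j Δt)_j` independently across steps and `X̄_{k+1} = Φ(X̄_k, P̄_k)`.
It is written as a sum over all increment paths of length `N - n`. -/
def valExp {d J : ℕ} (ν : Fin J → Fin d → ℤ) (a : Fin J → (Fin d → ℕ) → ℝ)
    (Δt : ℝ) (g : (Fin d → ℕ) → ℝ) (N n : ℕ) (x : Fin d → ℕ)
    (D : ℕ → (Fin d → ℕ) → Fin J → ℝ) : ℝ≥0∞ :=
  ∑' P : Fin (N - n) → Fin J → ℕ,
    (∏ k : Fin (N - n),
        ENNReal.ofReal
          (poiProb (fun j => D (n + k) (traj ν x (ext (N - n) P) k) j * Δt) (P k))) *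
      ENNReal.ofReal
        ((g (traj ν x (ext (N - n) P) (N - n))) ^ 2 *
          ∏ k : Fin (N - n),
            (lik a Δt (traj ν x (ext (N - n) P) k)
                (D (n + k) (traj ν x (ext (N - n) P) k)) (P k)) ^ 2)

/-- Value function `u(n,x)`: the infimum over all admissible Markov control sequences
of the expected weighted second moment of the controlled chain started at `X̄_n = x`. -/
def valueFn {d J : ℕ} (ν : Fin J → Fin d → ℤ) (a : Fin J → (Fin d → ℕ) → ℝ)
    (Δt : ℝ) (g : (Fin d → ℕ) → ℝ) (N n : ℕ) (x : Fin d → ℕ) : ℝ≥0∞ :=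
  ⨅ (D : ℕ → (Fin d → ℕ) → Fin J → ℝ) (_ : ∀ k y, Adm a y (D k y)),
    valExp ν a Δt g N n x D

/- ### Auxiliary development for the dynamic programming principle -/

namespace DPPaux

variable {d J : ℕ}

lemma ext_cons_zero {m : ℕ} (p0 : Fin J → ℕ) (Q : Fin m → Fin J → ℕ) :
    ext (m+1) (Fin.cons p0 Q) 0 = p0 := by simp [ext]

lemma ext_cons_succ {m : ℕ} (p0 : Fin J → ℕ) (Q : Fin m → Fin J → ℕ) (k : ℕ) :
    ext (m+1) (Fin.cons p0 Q) (k+1) = ext m Q k := by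
  unfold ext
  by_cases h : k < m
  · rw [dif_pos (Nat.succ_lt_succ h), dif_pos h]
    exact Fin.cons_succ (α := fun _ => Fin J → ℕ) p0 Q ⟨k, h⟩
  · rw [dif_neg (fun hh => h (Nat.lt_of_succ_lt_succ hh)), dif_neg h]

lemma traj_cons {m : ℕ} (ν : Fin J → Fin d → ℤ) (x : Fin d → ℕ)
    (p0 : Fin J → ℕ) (Q : Fin m → Fin J → ℕ) (k : ℕ) :
    traj ν x (ext (m+1) (Fin.cons p0 Q)) (k+1) =
      traj ν (Phi ν x p0) (ext m Q) k := by
  induction k with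
  | zero => simp [traj, ext_cons_zero]
  | succ k ih =>
      show Phi ν (traj ν x (ext (m+1) (Fin.cons p0 Q)) (k+1)) _ = _
      rw [ih, ext_cons_succ]
      rfl

/-- One step weight. -/
def Wt (a : Fin J → (Fin d → ℕ) → ℝ) (Δt : ℝ) (x : Fin d → ℕ)
    (δ : Fin J → ℝ) (p : Fin J → ℕ) : ℝ≥0∞ :=
  ENNReal.ofReal (poiProb (fun j => δ j * Δt) p) *
    ENNReal.ofReal ((lik a Δt x δ p) ^ 2)

/-- Target-form weight (real part). -/
def Tm (a : Fin J → (Fin d → ℕ) → ℝ) (Δt : ℝ) (x : Fin d → ℕ)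
    (δ : Fin J → ℝ) (p : Fin J → ℕ) : ℝ :=
  ∏ j, (Δt * δ j) ^ (p j) / ((p j).factorial : ℝ) * (a j x / δ j) ^ (2 * p j)

/-- `valExp` with explicit number of remaining steps. -/
def Ex (ν : Fin J → Fin d → ℤ) (a : Fin J → (Fin d → ℕ) → ℝ) (Δt : ℝ)
    (g : (Fin d → ℕ) → ℝ) (m n : ℕ) (x : Fin d → ℕ)
    (D : ℕ → (Fin d → ℕ) → Fin J → ℝ) : ℝ≥0∞ :=
  ∑' P : Fin m → Fin J → ℕ,
    (∏ k : Fin m,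
        ENNReal.ofReal
          (poiProb (fun j => D (n + k) (traj ν x (ext m P) k) j * Δt) (P k))) *
      ENNReal.ofReal
        ((g (traj ν x (ext m P) m)) ^ 2 *
          ∏ k : Fin m,
            (lik a Δt (traj ν x (ext m P) k)
                (D (n + k) (traj ν x (ext m P) k)) (P k)) ^ 2)

/-- The value-function recursion. -/
def vA (ν : Fin J → Fin d → ℤ) (a : Fin J → (Fin d → ℕ) → ℝ) (Δt : ℝ)
    (g : (Fin d → ℕ) → ℝ) : ℕ → (Fin d → ℕ) → ℝ≥0∞
  | 0, x => ENNReal.ofReal (g x ^ 2)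
  | (m+1), x =>
      ⨅ (δ : Fin J → ℝ) (_ : Adm a x δ),
        ENNReal.ofReal (Real.exp ((-2 * ∑ j, a j x + ∑ j, δ j) * Δt)) *
          ∑' p : Fin J → ℕ,
            ENNReal.ofReal (Tm a Δt x δ p) * vA ν a Δt g m (Phi ν x p)

lemma adm_a (a : Fin J → (Fin d → ℕ) → ℝ) (ha : ∀ j x, 0 ≤ a j x) (x : Fin d → ℕ) :
    Adm a x (fun j => a j x) := by
  intro j
  exact ⟨fun h => h, fun h => lt_of_le_of_ne (ha j x) (Ne.symm h)⟩

lemma adm_nonneg {a : Fin J → (Fin d → ℕ) → ℝ} {x : Fin d → ℕ} {δ : Fin J → ℝ}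
    (h : Adm a x δ) (j : Fin J) : 0 ≤ δ j := by
  rcases eq_or_ne (a j x) 0 with h0 | h0
  · exact ((h j).1 h0).ge
  · exact ((h j).2 h0).le

lemma poiProb_nonneg {r : Fin J → ℝ} (hr : ∀ j, 0 ≤ r j) (p : Fin J → ℕ) :
    0 ≤ poiProb r p :=
  Finset.prod_nonneg fun j _ => div_nonneg
    (mul_nonneg (Real.exp_nonneg _) (pow_nonneg (hr j) _)) (Nat.cast_nonneg _)

lemma wt_eq {a : Fin J → (Fin d → ℕ) → ℝ} {Δt : ℝ} (hΔt : 0 < Δt)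
    {x : Fin d → ℕ} {δ : Fin J → ℝ} (hadm : Adm a x δ) (p : Fin J → ℕ) :
    Wt a Δt x δ p =
      ENNReal.ofReal (Real.exp ((-2 * ∑ j, a j x + ∑ j, δ j) * Δt)) *
        ENNReal.ofReal (Tm a Δt x δ p) := by
  have hδ : ∀ j, 0 ≤ δ j := adm_nonneg hadm
  have hpoi : 0 ≤ poiProb (fun j => δ j * Δt) p :=
    poiProb_nonneg (fun j => mul_nonneg (hδ j) hΔt.le) p
  rw [Wt, ← ENNReal.ofReal_mul hpoi, ← ENNReal.ofReal_mul (Real.exp_nonneg _)]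
  congr 1
  have harg : (-2 * ∑ j, a j x + ∑ j, δ j) * Δt = ∑ j, (-2 * a j x + δ j) * Δt := by
    rw [← Finset.sum_mul]
    congr 1
    rw [Finset.sum_add_distrib, ← Finset.mul_sum]
  rw [harg, Real.exp_sum]
  unfold poiProb lik Tm
  rw [← Finset.prod_pow, ← Finset.prod_mul_distrib, ← Finset.prod_mul_distrib]
  refine Finset.prod_congr rfl fun j _ => ?_
  rcases eq_or_ne (a j x) 0 with h0 | h0
  · have hδ0 : δ j = 0 := (hadm j).1 h0
    rw [if_pos ⟨h0, hδ0⟩, h0, hδ0]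
    rcases Nat.eq_zero_or_pos (p j) with hp | hp
    · simp [hp, hδ0]
    · simp [zero_pow hp.ne', zero_pow (by omega : 2 * p j ≠ 0)]
      exact Or.inl ⟨Or.inl hδ0, hp.ne'⟩
  · have hδpos : 0 < δ j := (hadm j).2 h0
    rw [if_neg (by intro h; exact h0 h.1)]
    have e1 : Real.exp (-(δ j * Δt)) * Real.exp (-(a j x - δ j) * Δt) ^ 2 =
        Real.exp ((-2 * a j x + δ j) * Δt) := by
      rw [sq, ← Real.exp_add, ← Real.exp_add]
      congr 1
      ring
    rw [mul_pow, pow_mul' (a j x / δ j) 2 (p j), ← e1]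
    ring

/-- lower bound constant -/
def kap (a : Fin J → (Fin d → ℕ) → ℝ) (Δt : ℝ) (x : Fin d → ℕ) (p : Fin J → ℕ) : ℝ :=
  Real.exp (-(2 * ∑ j, a j x) * Δt) *
    ∏ j, (Δt * a j x) ^ (2 * p j) / ((p j).factorial : ℝ) ^ 2

lemma kap_pos {a : Fin J → (Fin d → ℕ) → ℝ} {Δt : ℝ} (hΔt : 0 < Δt)
    (ha : ∀ j x, 0 ≤ a j x) {x : Fin d → ℕ} {p : Fin J → ℕ}
    (hS : ∀ j, a j x = 0 → p j = 0) : 0 < kap a Δt x p := by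
  refine mul_pos (Real.exp_pos _) (Finset.prod_pos fun j _ => ?_)
  rcases Nat.eq_zero_or_pos (p j) with hp | hp
  · simp [hp]
  · have haj : a j x ≠ 0 := fun h => hp.ne' (hS j h)
    have : 0 < Δt * a j x := mul_pos hΔt (lt_of_le_of_ne (ha j x) (Ne.symm haj))
    positivity

lemma kap_le_wt {a : Fin J → (Fin d → ℕ) → ℝ} {Δt : ℝ} (hΔt : 0 < Δt)
    (ha : ∀ j x, 0 ≤ a j x) {x : Fin d → ℕ} {δ : Fin J → ℝ} (hadm : Adm a x δ)
    {p : Fin J → ℕ} (hS : ∀ j, a j x = 0 → p j = 0) :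
    ENNReal.ofReal (kap a Δt x p) ≤ Wt a Δt x δ p := by
  rw [wt_eq hΔt hadm, ← ENNReal.ofReal_mul (Real.exp_nonneg _)]
  refine ENNReal.ofReal_le_ofReal ?_
  have hδ : ∀ j, 0 ≤ δ j := adm_nonneg hadm
  have hsplit : Real.exp ((-2 * ∑ j, a j x + ∑ j, δ j) * Δt) * Tm a Δt x δ p =
      Real.exp (-(2 * ∑ j, a j x) * Δt) *
        ∏ j, Real.exp (δ j * Δt) *
          ((Δt * δ j) ^ (p j) / ((p j).factorial : ℝ) * (a j x / δ j) ^ (2 * p j)) := by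
    rw [Finset.prod_mul_distrib, ← Real.exp_sum, ← Finset.sum_mul]
    rw [show (-2 * ∑ j, a j x + ∑ j, δ j) * Δt =
      -(2 * ∑ j, a j x) * Δt + (∑ j, δ j) * Δt from by ring, Real.exp_add]
    rw [Tm]
    ring
  rw [kap, hsplit]
  refine mul_le_mul_of_nonneg_left (Finset.prod_le_prod (fun j _ => ?_) (fun j _ => ?_))
    (Real.exp_nonneg _)
  · exact div_nonneg (pow_nonneg (mul_nonneg hΔt.le (ha j x)) _) (by positivity)
  · rcases Nat.eq_zero_or_pos (p j) with hp | hp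
    · simp only [hp, Nat.mul_zero, pow_zero, Nat.factorial_zero, Nat.cast_one, one_pow]
      have := Real.one_le_exp (mul_nonneg (hδ j) hΔt.le)
      nlinarith
    · have haj : a j x ≠ 0 := fun h => hp.ne' (hS j h)
      have haj' : 0 < a j x := lt_of_le_of_ne (ha j x) (Ne.symm haj)
      have hδj : 0 < δ j := (hadm j).2 haj
      have hexp : (δ j * Δt) ^ (p j) / ((p j).factorial : ℝ) ≤ Real.exp (δ j * Δt) :=
        Real.pow_div_factorial_le_exp (x := δ j * Δt) (mul_nonneg (hδ j) hΔt.le) (p j)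
      calc (Δt * a j x) ^ (2 * p j) / ((p j).factorial : ℝ) ^ 2
          = (δ j * Δt) ^ (p j) / ((p j).factorial : ℝ) *
            ((Δt * δ j) ^ (p j) / ((p j).factorial : ℝ) * (a j x / δ j) ^ (2 * p j)) := by
            rw [div_pow (a j x) (δ j), pow_mul, pow_mul, pow_mul]
            field_simp
            ring
        _ ≤ Real.exp (δ j * Δt) *
            ((Δt * δ j) ^ (p j) / ((p j).factorial : ℝ) * (a j x / δ j) ^ (2 * p j)) := by
            refine mul_le_mul_of_nonneg_right hexp ?_
            positivity

lemma wt_a_zero {a : Fin J → (Fin d → ℕ) → ℝ} {Δt : ℝ} {x : Fin d → ℕ}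
    {p : Fin J → ℕ} (hS : ¬ ∀ j, a j x = 0 → p j = 0) :
    Wt a Δt x (fun j => a j x) p = 0 := by
  push_neg at hS
  obtain ⟨j, haj, hpj⟩ := hS
  rw [Wt, poiProb]
  rw [Finset.prod_eq_zero (Finset.mem_univ j) (by simp [haj, zero_pow hpj])]
  simp

section main

variable (ν : Fin J → Fin d → ℤ) (a : Fin J → (Fin d → ℕ) → ℝ)
  (Δt : ℝ) (g : (Fin d → ℕ) → ℝ)

lemma Ex_zero (n : ℕ) (x : Fin d → ℕ) (D : ℕ → (Fin d → ℕ) → Fin J → ℝ) :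
    Ex ν a Δt g 0 n x D = ENNReal.ofReal (g x ^ 2) := by
  unfold Ex
  rw [tsum_eq_single (default : Fin 0 → Fin J → ℕ)
    (fun b hb => absurd (Subsingleton.elim b _) hb)]
  simp [traj]

lemma Ex_succ (m n : ℕ) (x : Fin d → ℕ) (D : ℕ → (Fin d → ℕ) → Fin J → ℝ) :
    Ex ν a Δt g (m+1) n x D =
      ∑' p0 : Fin J → ℕ, Wt a Δt x (D n x) p0 * Ex ν a Δt g m (n+1) (Phi ν x p0) D := by
  unfold Ex
  rw [← (Fin.consEquiv (fun _ : Fin (m+1) => Fin J → ℕ)).tsum_eq, ENNReal.tsum_prod']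
  refine tsum_congr fun p0 => ?_
  rw [← ENNReal.tsum_mul_left]
  refine tsum_congr fun Q => ?_
  simp only [show (Fin.consEquiv (fun _ : Fin (m+1) => Fin J → ℕ)) (p0, Q) = Fin.cons p0 Q from rfl]
  rw [Fin.prod_univ_succ, Fin.prod_univ_succ]
  simp only [Fin.cons_zero, Fin.cons_succ, Fin.val_zero, Fin.val_succ, Nat.add_zero,
    traj_cons, ext_cons_zero, ext_cons_succ]
  simp only [show ∀ k : ℕ, n + 1 + k = n + (k + 1) from fun k => by omega]
  show (ENNReal.ofReal (poiProb (fun j => D n (traj ν x (ext (m+1) (Fin.cons p0 Q)) 0) j * Δt) p0) * _) * _ = _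
  rw [show traj ν x (ext (m+1) (Fin.cons p0 Q)) 0 = x from rfl]
  rw [show (g (traj ν (Phi ν x p0) (ext m Q) m)) ^ 2 *
        ((lik a Δt x (D n x) p0) ^ 2 *
          ∏ k : Fin m, (lik a Δt (traj ν (Phi ν x p0) (ext m Q) k)
            (D (n + (k + 1)) (traj ν (Phi ν x p0) (ext m Q) k)) (Q k)) ^ 2) =
      (lik a Δt x (D n x) p0) ^ 2 *
        ((g (traj ν (Phi ν x p0) (ext m Q) m)) ^ 2 *
          ∏ k : Fin m, (lik a Δt (traj ν (Phi ν x p0) (ext m Q) k)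
            (D (n + (k + 1)) (traj ν (Phi ν x p0) (ext m Q) k)) (Q k)) ^ 2) from by ring,
    ENNReal.ofReal_mul (sq_nonneg _)]
  unfold Wt
  ring

lemma Ex_congr (m n : ℕ) (x : Fin d → ℕ) {D1 D2 : ℕ → (Fin d → ℕ) → Fin J → ℝ}
    (h : ∀ k, n ≤ k → D1 k = D2 k) :
    Ex ν a Δt g m n x D1 = Ex ν a Δt g m n x D2 := by
  unfold Ex
  refine tsum_congr fun P => ?_
  simp only [show ∀ k : Fin m, D1 (n + (k : ℕ)) = D2 (n + (k : ℕ)) from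
    fun k => h _ (Nat.le_add_right _ _)]

variable {Δt : ℝ}

/-- infimum-body representation -/
lemma rep (hΔt : 0 < Δt) {x : Fin d → ℕ} {δ : Fin J → ℝ} (hadm : Adm a x δ)
    (V : (Fin J → ℕ) → ℝ≥0∞) :
    ENNReal.ofReal (Real.exp ((-2 * ∑ j, a j x + ∑ j, δ j) * Δt)) *
        ∑' p : Fin J → ℕ, ENNReal.ofReal (Tm a Δt x δ p) * V p =
      ∑' p : Fin J → ℕ, Wt a Δt x δ p * V p := by
  rw [← ENNReal.tsum_mul_left]
  refine tsum_congr fun p => ?_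
  rw [wt_eq hΔt hadm]
  ring

/-- `vA` is a lower bound for any admissible control. -/
lemma vA_le_Ex (hΔt : 0 < Δt) :
    ∀ m n (x : Fin d → ℕ) (D : ℕ → (Fin d → ℕ) → Fin J → ℝ),
      (∀ k y, Adm a y (D k y)) → vA ν a Δt g m x ≤ Ex ν a Δt g m n x D := by
  intro m
  induction m with
  | zero =>
      intro n x D _
      rw [Ex_zero]
      exact le_of_eq rfl
  | succ m ih =>
      intro n x D hD
      rw [Ex_succ]
      have h1 : vA ν a Δt g (m+1) x ≤
          ∑' p : Fin J → ℕ, Wt a Δt x (D n x) p * vA ν a Δt g m (Phi ν x p) := by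
        rw [← rep a hΔt (hD n x)]
        exact iInf₂_le (D n x) (hD n x)
      refine h1.trans (ENNReal.tsum_le_tsum fun p => ?_)
      exact mul_le_mul_right (ih (n+1) (Phi ν x p) D hD) _

/-- Near-optimal uniform controls. -/
lemma exists_Ex_le (hΔt : 0 < Δt) (ha : ∀ j x, 0 ≤ a j x) :
    ∀ m n (c : ℝ≥0∞), 1 < c →
      ∃ D : ℕ → (Fin d → ℕ) → Fin J → ℝ, (∀ k y, Adm a y (D k y)) ∧
        ∀ x, Ex ν a Δt g m n x D ≤ c ^ m * vA ν a Δt g m x := by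
  intro m
  induction m with
  | zero =>
      intro n c _
      refine ⟨fun _ y => fun j => a j y, fun k y => adm_a a ha y, fun x => ?_⟩
      rw [Ex_zero, pow_zero, one_mul]
      exact le_of_eq rfl
  | succ m ih =>
      intro n c hc
      obtain ⟨D', hD', hD'le⟩ := ih (n+1) c hc
      have hsel : ∀ x : Fin d → ℕ, ∃ δ : Fin J → ℝ, Adm a x δ ∧
          ∑' p : Fin J → ℕ, Wt a Δt x δ p * vA ν a Δt g m (Phi ν x p) ≤
            c * vA ν a Δt g (m+1) x := by
        intro x
        have hvA : vA ν a Δt g (m+1) x = ⨅ (δ : Fin J → ℝ) (_ : Adm a x δ),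
            ∑' p : Fin J → ℕ, Wt a Δt x δ p * vA ν a Δt g m (Phi ν x p) := by
          rw [vA]
          refine iInf_congr fun δ => ?_
          refine iInf_congr fun hadm => ?_
          exact rep a hΔt hadm _
        rcases eq_top_or_lt_top (vA ν a Δt g (m+1) x) with htop | hlt
        · refine ⟨fun j => a j x, adm_a a ha x, ?_⟩
          rw [htop, ENNReal.mul_top (by positivity)]
          exact le_top
        rcases eq_or_ne (vA ν a Δt g (m+1) x) 0 with h0 | h0
        · refine ⟨fun j => a j x, adm_a a ha x, ?_⟩
          rw [h0, mul_zero]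
          have hz : ∀ p : Fin J → ℕ,
              Wt a Δt x (fun j => a j x) p * vA ν a Δt g m (Phi ν x p) = 0 := by
            intro p
            by_cases hS : ∀ j, a j x = 0 → p j = 0
            · have hlow : ∀ (δ : Fin J → ℝ), Adm a x δ →
                  ENNReal.ofReal (kap a Δt x p) * vA ν a Δt g m (Phi ν x p) ≤
                    ∑' q : Fin J → ℕ, Wt a Δt x δ q * vA ν a Δt g m (Phi ν x q) := by
                intro δ hadm
                refine le_trans (mul_le_mul_left (kap_le_wt hΔt ha hadm hS) _) ?_
                exact ENNReal.le_tsum p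
              have : ENNReal.ofReal (kap a Δt x p) * vA ν a Δt g m (Phi ν x p) ≤
                  vA ν a Δt g (m+1) x := by
                rw [hvA]
                exact le_iInf₂ hlow
              rw [h0] at this
              have hk : ENNReal.ofReal (kap a Δt x p) ≠ 0 :=
                (ENNReal.ofReal_pos.mpr (kap_pos hΔt ha hS)).ne'
              have hv0 : vA ν a Δt g m (Phi ν x p) = 0 := by
                rcases mul_eq_zero.mp (le_antisymm this zero_le) with h | h
                · exact absurd h hk
                · exact h
              rw [hv0, mul_zero]
            · rw [wt_a_zero hS, zero_mul]
          rw [ENNReal.tsum_eq_zero.mpr hz]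
        · -- 0 < vA < ⊤
          have hlt' : vA ν a Δt g (m+1) x < c * vA ν a Δt g (m+1) x := by
            conv_lhs => rw [← one_mul (vA ν a Δt g (m+1) x)]
            exact ENNReal.mul_lt_mul_left h0 hlt.ne hc
          have hlt'' : (⨅ (δ : Fin J → ℝ) (_ : Adm a x δ),
              ∑' p : Fin J → ℕ, Wt a Δt x δ p * vA ν a Δt g m (Phi ν x p)) <
                c * vA ν a Δt g (m+1) x := lt_of_le_of_lt (le_of_eq hvA.symm) hlt'
          obtain ⟨δ, hδlt⟩ := iInf_lt_iff.mp hlt''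
          obtain ⟨hadm, hle⟩ := iInf_lt_iff.mp hδlt
          exact ⟨δ, hadm, hle.le⟩
      choose δsel hadm hsle using hsel
      refine ⟨fun k y => if k ≤ n then δsel y else D' k y, ?_, ?_⟩
      · intro k y
        by_cases hk : k ≤ n
        · simpa [hk] using hadm y
        · simpa [hk] using hD' k y
      · intro x
        rw [Ex_succ]
        have hDn : (fun k y => if k ≤ n then δsel y else D' k y) n x = δsel x := by
          simp
        calc ∑' p : Fin J → ℕ,
              Wt a Δt x ((fun k y => if k ≤ n then δsel y else D' k y) n x) p *
                Ex ν a Δt g m (n+1) (Phi ν x p)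
                  (fun k y => if k ≤ n then δsel y else D' k y)
            = ∑' p : Fin J → ℕ, Wt a Δt x (δsel x) p *
                Ex ν a Δt g m (n+1) (Phi ν x p) D' := by
              refine tsum_congr fun p => ?_
              rw [hDn, Ex_congr ν a Δt g m (n+1) (Phi ν x p) (D2 := D')
                (fun k hk => by
                  have : ¬ k ≤ n := by omega
                  simp [this])]
          _ ≤ ∑' p : Fin J → ℕ, Wt a Δt x (δsel x) p *
                (c ^ m * vA ν a Δt g m (Phi ν x p)) := by
              refine ENNReal.tsum_le_tsum fun p => ?_
              exact mul_le_mul_right (hD'le (Phi ν x p)) _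
          _ = c ^ m * ∑' p : Fin J → ℕ,
                Wt a Δt x (δsel x) p * vA ν a Δt g m (Phi ν x p) := by
              rw [← ENNReal.tsum_mul_left]
              exact tsum_congr fun p => by ring
          _ ≤ c ^ m * (c * vA ν a Δt g (m+1) x) := mul_le_mul_right (hsle x) _
          _ = c ^ (m+1) * vA ν a Δt g (m+1) x := by
              rw [pow_succ]
              ring

/-- auxiliary limit lemma -/
lemma le_of_forall_pow_mul {A B : ℝ≥0∞} (m : ℕ)
    (h : ∀ c : ℝ≥0∞, 1 < c → A ≤ c ^ m * B) : A ≤ B := by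
  rcases Nat.eq_zero_or_pos m with hm | hm
  · simpa [hm] using h 2 (by norm_num)
  refine ENNReal.le_of_forall_pos_le_add fun ε hε hB => ?_
  rcases eq_or_ne B 0 with hB0 | hB0
  · have := h 2 (by norm_num)
    rw [hB0, mul_zero] at this
    exact this.trans zero_le
  · have hεne : (ε : ℝ≥0∞) ≠ 0 := by exact_mod_cast hε.ne'
    have hBlt : B < B + ε := ENNReal.lt_add_right hB.ne hεne
    set r : ℝ≥0∞ := (B + ε) / B with hr
    have hr1 : 1 < r := by
      rw [hr, ENNReal.lt_div_iff_mul_lt (Or.inl hB0) (Or.inl hB.ne), one_mul]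
      exact hBlt
    set cc : ℝ≥0∞ := r ^ ((1 : ℝ) / m) with hcc
    have hc1 : 1 < cc := by
      rw [hcc]
      exact ENNReal.one_lt_rpow hr1 (by positivity)
    have hcm : cc ^ m = r := by
      rw [hcc, ← ENNReal.rpow_natCast (r ^ ((1:ℝ)/m)) m, ← ENNReal.rpow_mul,
        one_div, inv_mul_cancel₀ (by exact_mod_cast hm.ne' : (m : ℝ) ≠ 0),
        ENNReal.rpow_one]
    have := h cc hc1
    rw [hcm, hr, ENNReal.div_mul_cancel hB0 hB.ne] at this
    exact this

lemma valueFn_eq_vA (hΔt : 0 < Δt) (ha : ∀ j x, 0 ≤ a j x) (N n : ℕ) (x : Fin d → ℕ) :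
    valueFn ν a Δt g N n x = vA ν a Δt g (N - n) x := by
  refine le_antisymm ?_ ?_
  · refine le_of_forall_pow_mul (N - n) fun c hc => ?_
    obtain ⟨D, hD, hle⟩ := exists_Ex_le ν a g hΔt ha (N - n) n c hc
    calc valueFn ν a Δt g N n x ≤ valExp ν a Δt g N n x D := iInf₂_le D hD
      _ = Ex ν a Δt g (N - n) n x D := rfl
      _ ≤ c ^ (N - n) * vA ν a Δt g (N - n) x := hle x
  · exact le_iInf₂ fun D hD => vA_le_Ex ν a g hΔt (N - n) n x D hD

end main

end DPPaux


/-- **Dynamic programming relation for the importance-sampling value function.**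
The value function satisfies `u(N,x) = g²(x)` and, for `n < N`,
`u(n,x) = inf_{δ ∈ A_x} exp((-2 ∑_j a_j(x) + ∑_j δ_j) Δt) ·
∑_{p ∈ ℕ^J} [∏_j ((Δt δ_j)^{p_j}/p_j!) (a_j(x)/δ_j)^{2p_j}] · u(n+1, Φ(x,p))`. -/
theorem dynamic_programming_for_IS_value_function
    {d J : ℕ} (ν : Fin J → Fin d → ℤ) (a : Fin J → (Fin d → ℕ) → ℝ)
    (ha : ∀ j x, 0 ≤ a j x) (Δt : ℝ) (hΔt : 0 < Δt)
    (g : (Fin d → ℕ) → ℝ) (N : ℕ) :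
    (∀ x : Fin d → ℕ, valueFn ν a Δt g N N x = ENNReal.ofReal ((g x) ^ 2)) ∧
    (∀ n : ℕ, n < N → ∀ x : Fin d → ℕ,
      valueFn ν a Δt g N n x =
        ⨅ (δ : Fin J → ℝ) (_ : Adm a x δ),
          ENNReal.ofReal (Real.exp ((-2 * ∑ j, a j x + ∑ j, δ j) * Δt)) *
            ∑' p : Fin J → ℕ,
              ENNReal.ofReal
                  (∏ j, (Δt * δ j) ^ (p j) / ((p j).factorial : ℝ) *
                    (a j x / δ j) ^ (2 * p j)) *
                valueFn ν a Δt g N (n + 1) (Phi ν x p)) := by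
  constructor
  · intro x
    rw [DPPaux.valueFn_eq_vA ν a g hΔt ha N N x, Nat.sub_self]
    rfl
  · intro n hn x
    rw [DPPaux.valueFn_eq_vA ν a g hΔt ha N n x,
      show N - n = (N - (n+1)) + 1 from by omega, DPPaux.vA]
    simp only [show ∀ y : Fin d → ℕ, DPPaux.vA ν a Δt g (N - (n+1)) y =
      valueFn ν a Δt g N (n+1) y from
      fun y => (DPPaux.valueFn_eq_vA ν a g hΔt ha N (n+1) y).symm, DPPaux.Tm]
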